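/- arXiv:2112.11752 — 2 statements merged into one kernel-verified Lean document; each statement's English description precedes it below -/
import Mathlib

section
/- Let d ≥ 1 and let (x_n)_{n≥1} be a low-discrepancy sequence in [0,1)^d, i.e. there is a constant C > 0 with D_N*(x_n) ≤ C (log N)^d / N for all N ≥ 2. Then for every α with 0 < α < 1/d and every s > 0, lim_{N→∞} #{(l,m) : 1 ≤ l, m ≤ N, l ≠ m, ‖x_l − x_m‖_∞ ≤ s/N^{α}} / (N² · (2s/N^{α})^d) = 1; that is, (x_n) has converging number variance for every exponent 0 < α < 1/d with respect to ‖·‖_∞. -/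
open scoped Classical

/-- Distance from `x` to the nearest integer. -/
noncomputable def nint (x : ℝ) : ℝ := ⨅ k : ℤ, |x - (k : ℝ)|

/-- Maximum (sup) torus norm on `ℝ^d` built from the nearest-integer distance. -/
noncomputable def supNint {d : ℕ} (y : Fin d → ℝ) : ℝ := ⨆ i, nint (y i)

/-- Number of ordered pairs `(l,m)`, `1 ≤ l,m ≤ N`, `l ≠ m`, with
`‖x_l - x_m‖_∞ ≤ r`. -/
noncomputable def pairCount (d : ℕ) (x : ℕ → Fin d → ℝ) (N : ℕ) (r : ℝ) : ℕ :=
  (((Finset.Icc 1 N) ×ˢ (Finset.Icc 1 N)).filter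
    (fun p => p.1 ≠ p.2 ∧ supNint (fun i => x p.1 i - x p.2 i) ≤ r)).card

/-- Star-discrepancy of the first `N` points of `x` in `[0,1)^d`: supremum over all
anchored boxes `[0,b) ⊆ [0,1)^d` of `|#{1 ≤ n ≤ N : x_n ∈ [0,b)}/N - vol [0,b)|`. -/
noncomputable def starDiscrepancy (d N : ℕ) (x : ℕ → Fin d → ℝ) : ℝ :=
  sSup {v : ℝ | ∃ b : Fin d → ℝ, (∀ i, 0 < b i ∧ b i ≤ 1) ∧
    v = |(((Finset.Icc 1 N).filter (fun n => ∀ i, 0 ≤ x n i ∧ x n i < b i)).card : ℝ) / N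
      - ∏ i, b i|}

/-!
Fix a centre `x_m`. The points within torus distance `r ≤ 1/2` of `x_m` are those in a product
of arcs of `ℝ/ℤ`; cut at `0`, each arc is at most three intervals of `[0,1)`, so the
neighbourhood is a union of `3^d` boxes, and by inclusion–exclusion each box count is a signed sum
of `2^d` anchored-box counts. Hence `x_m` has `N (2r)^d + O(6^d N D_N)` neighbours, and summing
over `m`, `|pairCount - N² (2r)^d| ≤ N (6^d N D_N + 1)`. For `r = s N^{-α}` the relative error is
`O((log N)^d / N^{1 - α d})`, which tends to `0` because `α d < 1`.
-/

open Finset Filter Topology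

lemma nint_le (t : ℝ) (k : ℤ) : nint t ≤ |t - k| :=
  ciInf_le ⟨0, by rintro _ ⟨k, rfl⟩; exact abs_nonneg _⟩ k

lemma exists_abs_sub_lt_of_nint_lt {t a : ℝ} (h : nint t < a) : ∃ k : ℤ, |t - k| < a :=
  exists_lt_of_ciInf_lt h

lemma supNint_le_iff {d : ℕ} (y : Fin d → ℝ) {r : ℝ} (hr : 0 ≤ r) :
    supNint y ≤ r ↔ ∀ i, nint (y i) ≤ r :=
  ⟨fun h i => (le_ciSup (Set.finite_range _).bddAbove i).trans h, fun h => Real.iSup_le h hr⟩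

lemma prod_sub_eq_sum_powerset_piecewise {ι α R : Type*} [Fintype ι] [DecidableEq ι] [CommRing R]
    (Φ : ι → α → R) (a b : ι → α) :
    ∏ i, (Φ i (b i) - Φ i (a i))
      = ∑ t ∈ univ.powerset, (-1) ^ #t * ∏ i, Φ i (t.piecewise a b i) := by
  rw [prod_sub]
  refine sum_congr rfl fun t _ => ?_
  have hΦ : (fun i => Φ i (t.piecewise a b i))
      = t.piecewise (fun i => Φ i (a i)) (fun i => Φ i (b i)) := by
    ext i
    by_cases hi : i ∈ t <;> simp [hi]
  rw [hΦ, prod_piecewise, univ_inter, mul_assoc, mul_comm (∏ i ∈ univ \ t, _)]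

section Discrepancy

variable {d N : ℕ} {x : ℕ → Fin d → ℝ}

lemma abs_card_div_sub_prod_le_starDiscrepancy {b : Fin d → ℝ} (hb : ∀ i, 0 < b i ∧ b i ≤ 1) :
    |(#{n ∈ Icc 1 N | ∀ i, 0 ≤ x n i ∧ x n i < b i} : ℝ) / N - ∏ i, b i|
      ≤ starDiscrepancy d N x := by
  refine le_csSup ⟨1, ?_⟩ ⟨b, hb, rfl⟩
  rintro _ ⟨b, hb, rfl⟩
  have hcard : (#{n ∈ Icc 1 N | ∀ i, 0 ≤ x n i ∧ x n i < b i} : ℝ) / N ∈ Set.Icc 0 1 := by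
    refine ⟨by positivity, div_le_one_of_le₀ ?_ (Nat.cast_nonneg N)⟩
    exact_mod_cast (card_filter_le _ _).trans (Nat.card_Icc 1 N).le
  have hvol : ∏ i, b i ∈ Set.Icc (0 : ℝ) 1 :=
    ⟨prod_nonneg fun i _ => (hb i).1.le, prod_le_one (fun i _ => (hb i).1.le) fun i _ => (hb i).2⟩
  exact abs_sub_le_of_nonneg_of_le hcard.1 hcard.2 hvol.1 hvol.2

lemma starDiscrepancy_nonneg : 0 ≤ starDiscrepancy d N x :=
  Real.sSup_nonneg fun _ ⟨_, _, hv⟩ => hv ▸ abs_nonneg _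

lemma abs_sum_prod_lt_sub_le (hx : ∀ n i, 0 ≤ x n i) {b : Fin d → ℝ} (hb0 : 0 ≤ b) (hb1 : b ≤ 1) :
    |∑ n ∈ Icc 1 N, ∏ i, (if x n i < b i then (1 : ℝ) else 0) - N * ∏ i, b i|
      ≤ N * starDiscrepancy d N x := by
  by_cases hb : ∀ i, 0 < b i
  · have hsum : ∑ n ∈ Icc 1 N, ∏ i, (if x n i < b i then (1 : ℝ) else 0)
        = #{n ∈ Icc 1 N | ∀ i, 0 ≤ x n i ∧ x n i < b i} := by
      simp only [Fintype.prod_boole, ← sum_boole, hx, true_and]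
      congr!
    rcases N.eq_zero_or_pos with rfl | hN
    · simp
    have hN' : (N : ℝ) ≠ 0 := by positivity
    rw [hsum, ← mul_div_cancel₀ (#{n ∈ Icc 1 N | ∀ i, 0 ≤ x n i ∧ x n i < b i} : ℝ) hN',
      ← mul_sub, abs_mul, Nat.abs_cast]
    exact mul_le_mul_of_nonneg_left (abs_card_div_sub_prod_le_starDiscrepancy
      fun i => ⟨hb i, hb1 i⟩) N.cast_nonneg
  · obtain ⟨i₀, hi₀⟩ := not_forall.1 hb
    have hbi₀ : b i₀ = 0 := le_antisymm (not_lt.1 hi₀) (hb0 i₀)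
    have hzero : ∀ n, ∏ i, (if x n i < b i then (1 : ℝ) else 0) = 0 := fun n =>
      prod_eq_zero (mem_univ i₀) (if_neg (hbi₀ ▸ (hx n i₀).not_gt))
    simp only [hzero, sum_const_zero, prod_eq_zero (mem_univ i₀) hbi₀, mul_zero, sub_zero,
      abs_zero]
    exact mul_nonneg N.cast_nonneg starDiscrepancy_nonneg

lemma abs_sum_prod_Ico_sub_le (hx : ∀ n i, 0 ≤ x n i) {a b : Fin d → ℝ} (ha : 0 ≤ a)
    (hab : a ≤ b) (hb : b ≤ 1) :
    |∑ n ∈ Icc 1 N, ∏ i, (if x n i ∈ Set.Ico (a i) (b i) then (1 : ℝ) else 0)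
        - N * ∏ i, (b i - a i)| ≤ 2 ^ d * (N * starDiscrepancy d N x) := by
  have hind : ∀ n i, (if x n i ∈ Set.Ico (a i) (b i) then (1 : ℝ) else 0)
      = (if x n i < b i then 1 else 0) - (if x n i < a i then 1 else 0) := by
    intro n i
    have hi := hab i
    simp only [Set.mem_Ico]
    split_ifs <;> grind
  have hpoint : ∀ n, ∏ i, (if x n i ∈ Set.Ico (a i) (b i) then (1 : ℝ) else 0)
      = ∑ t ∈ univ.powerset, (-1) ^ #t * ∏ i, if x n i < t.piecewise a b i then 1 else 0 :=
    fun n => by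
      simp only [hind]
      exact prod_sub_eq_sum_powerset_piecewise (fun i y => if x n i < y then (1 : ℝ) else 0) a b
  calc _ = |∑ t ∈ univ.powerset, (-1) ^ #t * (∑ n ∈ Icc 1 N,
          ∏ i, (if x n i < t.piecewise a b i then (1 : ℝ) else 0)
            - N * ∏ i, t.piecewise a b i)| := by
        rw [sum_congr rfl fun n _ => hpoint n, sum_comm,
          prod_sub_eq_sum_powerset_piecewise (fun _ y => y), mul_sum, ← sum_sub_distrib]
        simp only [mul_sub, mul_sum, mul_left_comm]
    _ ≤ ∑ t ∈ (univ : Finset (Fin d)).powerset, N * starDiscrepancy d N x := by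
        refine (abs_sum_le_sum_abs _ _).trans (sum_le_sum fun t _ => ?_)
        rw [abs_mul, abs_pow, abs_neg, abs_one, one_pow, one_mul]
        exact abs_sum_prod_lt_sub_le hx (t.le_piecewise_of_le_of_le ha (ha.trans hab))
          (t.piecewise_le_of_le_of_le (hab.trans hb) hb)
    _ = 2 ^ d * (N * starDiscrepancy d N x) := by simp

end Discrepancy

/-- For `c ∈ [0,1)` and `r ≤ 1/2`, the arc `[c - r, c + r)` of `ℝ/ℤ` is the disjoint union of the
intervals `[arcLo c r j, arcHi c r j)` of `[0,1)`; pieces `1` and `2` are what wraps around `0`. -/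
noncomputable def arcLo (c r : ℝ) : Fin 3 → ℝ := ![max (c - r) 0, min (c - r + 1) 1, 0]

noncomputable def arcHi (c r : ℝ) : Fin 3 → ℝ := ![min (c + r) 1, 1, max (c + r - 1) 0]

noncomputable def arcIndicator (c r y : ℝ) : ℝ :=
  ∑ j, if y ∈ Set.Ico (arcLo c r j) (arcHi c r j) then 1 else 0

section Arc

variable {c r y : ℝ}

lemma arcLo_nonneg (hc : 0 ≤ c) (hr : r ≤ 1) (j : Fin 3) : 0 ≤ arcLo c r j := by
  fin_cases j <;> simp [arcLo]
  linarith

lemma arcHi_le_one (hc : c ≤ 1) (hr : r ≤ 1) (j : Fin 3) : arcHi c r j ≤ 1 := by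
  fin_cases j <;> simp [arcHi]
  linarith

lemma arcLo_le_arcHi (hc : c ∈ Set.Icc 0 1) (hr : 0 ≤ r) (j : Fin 3) :
    arcLo c r j ≤ arcHi c r j := by
  obtain ⟨hc₀, hc₁⟩ := hc
  fin_cases j <;> simp [arcLo, arcHi]
  refine ⟨⟨?_, ?_⟩, ?_⟩ <;> linarith

lemma sum_arcHi_sub_arcLo (c r : ℝ) : ∑ j, (arcHi c r j - arcLo c r j) = 2 * r := by
  simp only [Fin.sum_univ_three, arcLo, arcHi, Matrix.cons_val]
  grind

lemma nint_sub_le_of_mem_arc (hc : c ∈ Set.Ico 0 1) {j : Fin 3}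
    (hy : y ∈ Set.Ico (arcLo c r j) (arcHi c r j)) : nint (y - c) ≤ r := by
  obtain ⟨hc₀, hc₁⟩ := hc
  obtain ⟨hlo, hhi⟩ := hy
  fin_cases j <;> simp [arcLo, arcHi] at hlo hhi
  · refine (nint_le _ 0).trans (abs_le.2 ⟨?_, ?_⟩) <;> push_cast <;> linarith
  · have := hlo.resolve_right hhi.not_ge
    refine (nint_le _ 1).trans (abs_le.2 ⟨?_, ?_⟩) <;> push_cast <;> linarith
  · have := hhi.resolve_right hlo.not_gt
    refine (nint_le _ (-1)).trans (abs_le.2 ⟨?_, ?_⟩) <;> push_cast <;> linarith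

lemma exists_mem_arc_of_nint_sub_lt (hc : c ∈ Set.Ico 0 1) (hy : y ∈ Set.Ico 0 1) (hr : r ≤ 1 / 2)
    (h : nint (y - c) < r) : ∃ j, y ∈ Set.Ico (arcLo c r j) (arcHi c r j) := by
  obtain ⟨hc₀, hc₁⟩ := hc
  obtain ⟨hy₀, hy₁⟩ := hy
  obtain ⟨k, hk⟩ := exists_abs_sub_lt_of_nint_lt h
  obtain ⟨hk₁, hk₂⟩ := abs_lt.1 hk
  have hk_lt : k < 2 := by exact_mod_cast (show (k : ℝ) < 2 by linarith)
  have hk_gt : -2 < k := by exact_mod_cast (show (-2 : ℝ) < k by linarith)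
  simp only [arcLo, arcHi, Set.mem_Ico]
  interval_cases k <;> push_cast at hk₁ hk₂
  · exact ⟨2, hy₀, lt_max_of_lt_left (by linarith)⟩
  · exact ⟨0, max_le (by linarith) hy₀, lt_min (by linarith) hy₁⟩
  · exact ⟨1, min_le_of_left_le (by linarith), hy₁⟩

lemma arcIndicator_nonneg (c r y : ℝ) : 0 ≤ arcIndicator c r y := by
  unfold arcIndicator
  positivity

lemma arcIndicator_le_one (hc : c ∈ Set.Ico 0 1) (hr : r ≤ 1 / 2) : arcIndicator c r y ≤ 1 := by
  obtain ⟨hc₀, hc₁⟩ := hc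
  have h₂₀ : arcHi c r 2 ≤ arcLo c r 0 :=
    show max (c + r - 1) 0 ≤ max (c - r) 0 from max_le_max (by linarith) le_rfl
  have h₀₁ : arcHi c r 0 ≤ arcLo c r 1 :=
    show min (c + r) 1 ≤ min (c - r + 1) 1 from min_le_min (by linarith) le_rfl
  have h₂₁ : arcHi c r 2 ≤ arcLo c r 1 :=
    show max (c + r - 1) 0 ≤ min (c - r + 1) 1 from
      max_le (le_min (by linarith) (by linarith)) (le_min (by linarith) zero_le_one)
  simp only [arcIndicator, Fin.sum_univ_three, Set.mem_Ico]
  split_ifs <;> grind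

lemma arcIndicator_le (hc : c ∈ Set.Ico 0 1) (hr : r ≤ 1 / 2) :
    arcIndicator c r y ≤ if nint (y - c) ≤ r then 1 else 0 := by
  split_ifs with h
  · exact arcIndicator_le_one hc hr
  · exact (sum_eq_zero fun j _ => if_neg fun hy => h (nint_sub_le_of_mem_arc hc hy)).le

lemma le_arcIndicator (hc : c ∈ Set.Ico 0 1) (hy : y ∈ Set.Ico 0 1) (hr : r ≤ 1 / 2) :
    (if nint (y - c) < r then 1 else 0) ≤ arcIndicator c r y := by
  split_ifs with h
  · obtain ⟨j, hj⟩ := exists_mem_arc_of_nint_sub_lt hc hy hr h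
    rw [arcIndicator, sum_boole]
    exact_mod_cast card_pos.2 ⟨j, mem_filter.2 ⟨mem_univ j, hj⟩⟩
  · exact arcIndicator_nonneg c r y

end Arc

section PairCount

variable {d N : ℕ} {x : ℕ → Fin d → ℝ} {r : ℝ}

lemma abs_sum_prod_arcIndicator_sub_le (hx : ∀ n i, x n i ∈ Set.Ico 0 1) {c : Fin d → ℝ}
    (hc : ∀ i, c i ∈ Set.Ico 0 1) (hr₀ : 0 ≤ r) (hr : r ≤ 1 / 2) :
    |∑ n ∈ Icc 1 N, ∏ i, arcIndicator (c i) r (x n i) - N * (2 * r) ^ d|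
      ≤ 6 ^ d * (N * starDiscrepancy d N x) := by
  have hvol : ∏ i, ∑ j, (arcHi (c i) r j - arcLo (c i) r j) = (2 * r) ^ d := by
    simp only [sum_arcHi_sub_arcLo, prod_const, card_univ, Fintype.card_fin]
  calc _ = |∑ φ : Fin d → Fin 3, (∑ n ∈ Icc 1 N,
          ∏ i, (if x n i ∈ Set.Ico (arcLo (c i) r (φ i)) (arcHi (c i) r (φ i)) then (1 : ℝ) else 0)
          - N * ∏ i, (arcHi (c i) r (φ i) - arcLo (c i) r (φ i)))| := by
        simp only [arcIndicator, Fintype.prod_sum]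
        rw [sum_comm, ← hvol, Fintype.prod_sum, mul_sum, sum_sub_distrib]
    _ ≤ ∑ φ : Fin d → Fin 3, 2 ^ d * (N * starDiscrepancy d N x) :=
        (abs_sum_le_sum_abs _ _).trans <| sum_le_sum fun φ _ =>
          abs_sum_prod_Ico_sub_le (fun n i => (hx n i).1)
            (fun i => arcLo_nonneg (hc i).1 (by linarith) (φ i))
            (fun i => arcLo_le_arcHi (Set.Ico_subset_Icc_self (hc i)) hr₀ (φ i))
            (fun i => arcHi_le_one (hc i).2.le (by linarith) (φ i))
    _ = 6 ^ d * (N * starDiscrepancy d N x) := by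
        simp only [sum_const, card_univ, Fintype.card_pi, Fintype.card_fin, prod_const,
          nsmul_eq_mul]
        push_cast
        rw [show (6 : ℝ) = 3 * 2 by norm_num, mul_pow, mul_assoc]

lemma prod_arcIndicator_le {c y : Fin d → ℝ} (hc : ∀ i, c i ∈ Set.Ico 0 1) (hr : r ≤ 1 / 2) :
    ∏ i, arcIndicator (c i) r (y i) ≤ if ∀ i, nint (y i - c i) ≤ r then 1 else 0 := by
  refine (prod_le_prod (fun i _ => arcIndicator_nonneg _ _ _) fun i _ =>
    arcIndicator_le (hc i) hr).trans_eq ?_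
  rw [Fintype.prod_boole]
  congr!

lemma le_prod_arcIndicator {c y : Fin d → ℝ} (hc : ∀ i, c i ∈ Set.Ico 0 1)
    (hy : ∀ i, y i ∈ Set.Ico 0 1) (hr : r ≤ 1 / 2) :
    (if ∀ i, nint (y i - c i) < r then 1 else 0) ≤ ∏ i, arcIndicator (c i) r (y i) := by
  refine le_of_eq_of_le ?_ (prod_le_prod (fun i _ => by positivity) fun i _ =>
    le_arcIndicator (hc i) (hy i) hr)
  rw [Fintype.prod_boole]
  congr!

lemma pairCount_eq_sum (hr : 0 ≤ r) :
    (pairCount d x N r : ℝ) = ∑ m ∈ Icc 1 N, ∑ l ∈ Icc 1 N,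
      if l ≠ m ∧ ∀ i, nint (x l i - x m i) ≤ r then 1 else 0 := by
  rw [pairCount, card_filter, Nat.cast_sum, sum_product_right]
  simp only [supNint_le_iff _ hr]
  push_cast
  rfl

lemma pairCount_ge (hx : ∀ n i, x n i ∈ Set.Ico 0 1) (hr₀ : 0 ≤ r) (hr : r ≤ 1 / 2) :
    N * (N * (2 * r) ^ d - 6 ^ d * (N * starDiscrepancy d N x) - 1) ≤ pairCount d x N r := by
  have hrow : ∀ m ∈ Icc 1 N, N * (2 * r) ^ d - 6 ^ d * (N * starDiscrepancy d N x) - 1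
      ≤ ∑ l ∈ Icc 1 N, if l ≠ m ∧ ∀ i, nint (x l i - x m i) ≤ r then 1 else 0 := by
    intro m hm
    have hcount := (abs_le.1 (abs_sum_prod_arcIndicator_sub_le (N := N) hx (hx m) hr₀ hr)).1
    have hdiag : ∑ l ∈ Icc 1 N, ∏ i, arcIndicator (x m i) r (x l i)
        ≤ ∑ l ∈ Icc 1 N, ((if l ≠ m ∧ ∀ i, nint (x l i - x m i) ≤ r then 1 else 0)
          + if l = m then 1 else 0) :=
      sum_le_sum fun l _ => (prod_arcIndicator_le (hx m) hr).trans <| by split_ifs <;> simp_all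
    rw [sum_add_distrib, sum_ite_eq', if_pos hm] at hdiag
    linarith
  rw [pairCount_eq_sum hr₀]
  refine le_of_eq_of_le ?_ (card_nsmul_le_sum _ _ _ hrow)
  simp

lemma pairCount_le_of_lt (hx : ∀ n i, x n i ∈ Set.Ico 0 1) (hr₀ : 0 ≤ r) {r' : ℝ} (hrr' : r < r')
    (hr' : r' ≤ 1 / 2) :
    pairCount d x N r ≤ N * (N * (2 * r') ^ d + 6 ^ d * (N * starDiscrepancy d N x)) := by
  have hrow : ∀ m ∈ Icc 1 N, ∑ l ∈ Icc 1 N,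
      (if l ≠ m ∧ ∀ i, nint (x l i - x m i) ≤ r then 1 else 0)
        ≤ N * (2 * r') ^ d + 6 ^ d * (N * starDiscrepancy d N x) := by
    intro m _
    have hcount := (abs_le.1 (abs_sum_prod_arcIndicator_sub_le (N := N) hx (hx m)
      (hr₀.trans hrr'.le) hr')).2
    have hball : ∑ l ∈ Icc 1 N, (if l ≠ m ∧ ∀ i, nint (x l i - x m i) ≤ r then (1 : ℝ) else 0)
        ≤ ∑ l ∈ Icc 1 N, ∏ i, arcIndicator (x m i) r' (x l i) :=
      sum_le_sum fun l _ => by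
        refine le_trans ?_ (le_prod_arcIndicator (hx m) (hx l) hr')
        by_cases h : l ≠ m ∧ ∀ i, nint (x l i - x m i) ≤ r
        · rw [if_pos h, if_pos fun i => (h.2 i).trans_lt hrr']
        · rw [if_neg h]
          positivity
    linarith
  rw [pairCount_eq_sum hr₀]
  refine (sum_le_card_nsmul _ _ _ hrow).trans_eq ?_
  simp [mul_add]

-- The closed neighbourhood of radius `r` lies in the half-open arcs of every radius `r' > r`.
lemma pairCount_le (hx : ∀ n i, x n i ∈ Set.Ico 0 1) (hr₀ : 0 ≤ r) (hr : r < 1 / 2) :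
    pairCount d x N r ≤ N * (N * (2 * r) ^ d + 6 ^ d * (N * starDiscrepancy d N x)) := by
  have hcont : ContinuousWithinAt
      (fun r' : ℝ => N * (N * (2 * r') ^ d + 6 ^ d * (N * starDiscrepancy d N x))) (Set.Ioi r) r :=
    by fun_prop
  refine ge_of_tendsto hcont ?_
  filter_upwards [Ioc_mem_nhdsGT hr] with r' hr'
  exact pairCount_le_of_lt hx hr₀ hr'.1 hr'.2

lemma abs_pairCount_sub_le (hx : ∀ n i, x n i ∈ Set.Ico 0 1) (hr₀ : 0 ≤ r) (hr : r < 1 / 2) :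
    |pairCount d x N r - N ^ 2 * (2 * r) ^ d| ≤ N * (6 ^ d * (N * starDiscrepancy d N x) + 1) := by
  have hge := pairCount_ge (N := N) hx hr₀ hr.le
  have hle := pairCount_le (N := N) hx hr₀ hr
  rw [abs_le]
  constructor <;> nlinarith

end PairCount

lemma abs_pairCount_div_sub_one_le {d N : ℕ} {x : ℕ → Fin d → ℝ} {r : ℝ}
    (hx : ∀ n i, x n i ∈ Set.Ico 0 1) (hN : 0 < N) (hr₀ : 0 < r) (hr : r < 1 / 2) :
    |pairCount d x N r / (N ^ 2 * (2 * r) ^ d) - 1|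
      ≤ (6 ^ d * (N * starDiscrepancy d N x) + 1) / (N * (2 * r) ^ d) := by
  have hQ : (0 : ℝ) < N ^ 2 * (2 * r) ^ d := by positivity
  calc _ = |pairCount d x N r - N ^ 2 * (2 * r) ^ d| / (N ^ 2 * (2 * r) ^ d) := by
        rw [div_sub_one hQ.ne', abs_div, abs_of_pos hQ]
    _ ≤ N * (6 ^ d * (N * starDiscrepancy d N x) + 1) / (N ^ 2 * (2 * r) ^ d) := by
        gcongr
        exact abs_pairCount_sub_le hx hr₀.le hr
    _ = _ := by
        field_simp

lemma tendsto_mul_log_pow_add_div_rpow_atTop (d : ℕ) {β : ℝ} (hβ : 0 < β) (a b : ℝ) :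
    Tendsto (fun N : ℕ => (a * Real.log N ^ d + b) / (N : ℝ) ^ β) atTop (𝓝 0) := by
  have hlog : Tendsto (fun t : ℝ => Real.log t ^ d / t ^ β) atTop (𝓝 0) := by
    simpa using (isLittleO_log_rpow_rpow_atTop d hβ).tendsto_div_nhds_zero
  have hinv : Tendsto (fun t : ℝ => (t ^ β)⁻¹) atTop (𝓝 0) :=
    tendsto_inv_atTop_zero.comp (tendsto_rpow_atTop hβ)
  have h := (hlog.const_mul a).add (hinv.const_mul b)
  rw [mul_zero, mul_zero, add_zero] at h
  refine (h.comp tendsto_natCast_atTop_atTop).congr fun N => ?_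
  simp only [Function.comp_apply]
  ring

lemma tendsto_mul_log_pow_add_div_mul_pow_atTop (d : ℕ) {α : ℝ} (hαd : α * d < 1) (a b s : ℝ) :
    Tendsto (fun N : ℕ => (a * Real.log N ^ d + b) / (N * (2 * (s / N ^ α)) ^ d)) atTop (𝓝 0) := by
  have h := (tendsto_mul_log_pow_add_div_rpow_atTop d (sub_pos.2 hαd) a b).div_const ((2 * s) ^ d)
  rw [zero_div] at h
  refine h.congr' ((eventually_gt_atTop 0).mono fun N hN => ?_)
  have hN₀ : (0 : ℝ) < N := by positivity
  have hvol : (N : ℝ) * (2 * (s / N ^ α)) ^ d = (2 * s) ^ d * N ^ (1 - α * d) := by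
    rw [← mul_div_assoc, div_pow, ← Real.rpow_natCast (_ ^ α), ← Real.rpow_mul hN₀.le,
      Real.rpow_sub hN₀, Real.rpow_one]
    ring
  dsimp only
  rw [hvol]
  ring

theorem stmt2_general (d : ℕ) (x : ℕ → Fin d → ℝ)
    (hx : ∀ n, ∀ i, x n i ∈ Set.Ico (0 : ℝ) 1)
    (C : ℝ)
    (hld : ∀ N : ℕ, 2 ≤ N → starDiscrepancy d N x ≤ C * (Real.log N) ^ d / N) :
    ∀ α : ℝ, 0 < α → α < 1 / d → ∀ s : ℝ, 0 < s →
      Filter.Tendsto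
        (fun N : ℕ => (pairCount d x N (s / (N : ℝ) ^ α) : ℝ) /
          ((N : ℝ) ^ 2 * (2 * s / (N : ℝ) ^ α) ^ d)) Filter.atTop (nhds 1) := by
  intro α hα hαd s hs
  have hαd' : α * d < 1 := by
    rcases d.eq_zero_or_pos with rfl | hd
    · simp
    · exact (lt_div_iff₀ (by positivity)).1 hαd
  have hsmall : ∀ᶠ N : ℕ in atTop, s / (N : ℝ) ^ α < 1 / 2 :=
    (tendsto_const_nhds.div_atTop
      ((tendsto_rpow_atTop hα).comp tendsto_natCast_atTop_atTop)).eventually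
      (gt_mem_nhds (by norm_num))
  simp only [mul_div_assoc]
  rw [tendsto_iff_norm_sub_tendsto_zero]
  refine squeeze_zero' (.of_forall fun _ => norm_nonneg _) ?_
    (tendsto_mul_log_pow_add_div_mul_pow_atTop d hαd' (6 ^ d * C) 1 s)
  filter_upwards [eventually_ge_atTop 2, hsmall] with N hN hsN
  refine (abs_pairCount_div_sub_one_le hx (by omega) (by positivity) hsN).trans ?_
  rw [mul_assoc]
  gcongr (6 ^ d * ?_ + 1) / _
  rw [← le_div_iff₀' (by positivity)]
  exact hld N hN

theorem stmt2 (d : ℕ) (hd : 1 ≤ d) (x : ℕ → Fin d → ℝ)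
    (hx : ∀ n, ∀ i, x n i ∈ Set.Ico (0 : ℝ) 1)
    (C : ℝ) (hC : 0 < C)
    (hld : ∀ N : ℕ, 2 ≤ N → starDiscrepancy d N x ≤ C * (Real.log N) ^ d / N) :
    ∀ α : ℝ, 0 < α → α < 1 / d → ∀ s : ℝ, 0 < s →
      Filter.Tendsto
        (fun N : ℕ => (pairCount d x N (s / (N : ℝ) ^ α) : ℝ) /
          ((N : ℝ) ^ 2 * (2 * s / (N : ℝ) ^ α) ^ d)) Filter.atTop (nhds 1) :=
  stmt2_general d x hx C hld
end

section
/- Let z be an irrational real number whose continued fraction partial quotients a_n are bounded, i.e. there is K ∈ ℕ with a_n ≤ K for all n ≥ 1. Then for every α with 0 < α < 1, lim_{N→∞} N^α · sup_{x ∈ [0,1)} min_{1 ≤ n ≤ N} ‖x − n z‖ = 0, where ‖·‖ denotes the distance to the nearest integer. -/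
/-!
If `p / q` is a reduced fraction, the points `m z`, `1 ≤ m ≤ q`, lie within `|q z - p|` of the
points `m p / q`, which run through all of `(1 / q) ℤ / ℤ`. Hence once `q ≤ N` every `x` is within
`1 / (2 q) + |q z - p|` of one of the first `N` points. For a convergent `p / q` of `z` we have
`|q z - p| ≤ 1 / q`, and bounded partial quotients `aₙ ≤ K` make consecutive convergent
denominators grow by a factor at most `K + 1`. Choosing convergent denominators `q ≤ N < q'`
gives a dispersion at most `3 (K + 1) / (2 N)`, and `N ^ α / N → 0`.
-/

open scoped Classical

/-- Iterated fractional parts of the continued fraction (Gauss map) algorithm: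
`cfX z 0 = {z}`, `cfX z (n+1) = {1 / cfX z n}`. -/
noncomputable def cfX (z : ℝ) : ℕ → ℝ
  | 0 => Int.fract z
  | n + 1 => Int.fract (1 / cfX z n)

/-- Partial quotients of the continued fraction expansion `z = [a₀; a₁, a₂, …]`:
`cfA z n = aₙ` for `n ≥ 1` (the value at `0` is a dummy). -/
noncomputable def cfA (z : ℝ) : ℕ → ℕ
  | 0 => 0
  | n + 1 => ⌊1 / cfX z n⌋₊

/-- Dispersion (covering radius) of the first `N` points of the Kronecker
sequence of `z` on the circle: `sup_{x ∈ [0,1)} min_{1 ≤ n ≤ N} ‖x - n z‖`. -/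
noncomputable def dispersion (z : ℝ) (N : ℕ) : ℝ :=
  sSup {v : ℝ | ∃ x : ℝ, 0 ≤ x ∧ x < 1 ∧
    v = sInf {w : ℝ | ∃ n : ℕ, 1 ≤ n ∧ n ≤ N ∧ w = nint (x - (n : ℝ) * z)}}

open Filter Topology Finset

lemma nint_nonneg (x : ℝ) : 0 ≤ nint x :=
  Real.iInf_nonneg fun _ => abs_nonneg _

lemma nint_le_abs_sub (x : ℝ) (k : ℤ) : nint x ≤ |x - k| :=
  ciInf_le ⟨0, by rintro y ⟨k, rfl⟩; exact abs_nonneg _⟩ k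

lemma exists_one_le_le_and_dvd_sub {q : ℕ} (hq : 0 < q) (a : ℤ) :
    ∃ m : ℕ, 1 ≤ m ∧ m ≤ q ∧ (q : ℤ) ∣ m - a := by
  have h0 : 0 ≤ (a - 1) % q := Int.emod_nonneg _ (by omega)
  have hlt : (a - 1) % q < q := Int.emod_lt_of_pos _ (by omega)
  refine ⟨((a - 1) % q).toNat + 1, by omega, by omega, ?_⟩
  refine ⟨-((a - 1) / q), ?_⟩
  push_cast
  rw [Int.toNat_of_nonneg h0, Int.emod_def]
  ring

lemma exists_nint_sub_mul_le {q : ℕ} (hq : 0 < q) {p : ℤ} (hpq : IsCoprime p q) (z x : ℝ) :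
    ∃ m : ℕ, 1 ≤ m ∧ m ≤ q ∧ nint (x - m * z) ≤ 1 / (2 * q) + |q * z - p| := by
  obtain ⟨u, v, huv⟩ := hpq
  set j := round ((q : ℝ) * x)
  obtain ⟨m, hm1, hmq, t, ht⟩ := exists_one_le_le_and_dvd_sub hq (j * u)
  refine ⟨m, hm1, hmq, ?_⟩
  have hqR : (0 : ℝ) < q := by exact_mod_cast hq
  have hmod : (m * p - j : ℤ) = q * (t * p - j * v) := by linear_combination p * ht + j * huv
  have hmodR : (m : ℝ) * p - j = q * (t * p - j * v) := by exact_mod_cast hmod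
  have hsplit : x - m * z - ((j * v - t * p : ℤ) : ℝ) = (q * x - j) / q - m / q * (q * z - p) := by
    field_simp
    push_cast
    linear_combination -hmodR
  have hround : |(q * x - j) / q| ≤ 1 / (2 * q) := by
    calc |(q * x - j) / q| = |q * x - j| / q := by rw [abs_div, abs_of_pos hqR]
      _ ≤ (1 / 2) / q := by gcongr; exact abs_sub_round _
      _ = 1 / (2 * q) := by ring
  have hshift : |m / q * (q * z - p)| ≤ |q * z - p| := by
    rw [abs_mul, abs_of_nonneg (by positivity : (0 : ℝ) ≤ m / q)]
    refine mul_le_of_le_one_left (abs_nonneg _) ?_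
    rw [div_le_one hqR]
    exact_mod_cast hmq
  calc nint (x - m * z) ≤ |x - m * z - ((j * v - t * p : ℤ) : ℝ)| := nint_le_abs_sub _ _
    _ = |(q * x - j) / q - m / q * (q * z - p)| := by rw [hsplit]
    _ ≤ |(q * x - j) / q| + |m / q * (q * z - p)| := abs_sub _ _
    _ ≤ 1 / (2 * q) + |q * z - p| := add_le_add hround hshift

lemma dispersion_nonneg (z : ℝ) (N : ℕ) : 0 ≤ dispersion z N := by
  refine Real.sSup_nonneg ?_
  rintro _ ⟨x, -, -, rfl⟩
  refine Real.sInf_nonneg ?_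
  rintro _ ⟨n, -, -, rfl⟩
  exact nint_nonneg _

lemma dispersion_le_of_isCoprime {q N : ℕ} (hq : 0 < q) (hqN : q ≤ N) {p : ℤ}
    (hpq : IsCoprime p q) (z : ℝ) : dispersion z N ≤ 1 / (2 * q) + |q * z - p| := by
  refine Real.sSup_le ?_ (by positivity)
  rintro _ ⟨x, -, -, rfl⟩
  obtain ⟨m, hm1, hmq, hm⟩ := exists_nint_sub_mul_le hq hpq z x
  refine csInf_le_of_le ⟨0, ?_⟩ ⟨m, hm1, hmq.trans hqN, rfl⟩ hm
  rintro _ ⟨n, -, -, rfl⟩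
  exact nint_nonneg _

-- Shifted by one from the classical indexing: `cfNum z (n + 1) / cfDen z (n + 1) = pₙ / qₙ`.
noncomputable def cfNum (z : ℝ) : ℕ → ℤ
  | 0 => 1
  | 1 => ⌊z⌋
  | n + 2 => cfA z (n + 1) * cfNum z (n + 1) + cfNum z n

noncomputable def cfDen (z : ℝ) : ℕ → ℕ
  | 0 => 0
  | 1 => 1
  | n + 2 => cfA z (n + 1) * cfDen z (n + 1) + cfDen z n

section ContinuedFraction

variable {z : ℝ}

lemma irrational_cfX (hz : Irrational z) : ∀ n, Irrational (cfX z n)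
  | 0 => by simpa [cfX, ← Int.self_sub_floor] using hz.sub_intCast ⌊z⌋
  | n + 1 => by
    simpa [cfX, ← Int.self_sub_floor, one_div] using
      (irrational_cfX hz n).inv.sub_intCast ⌊(cfX z n)⁻¹⌋

lemma cfX_nonneg (z : ℝ) (n : ℕ) : 0 ≤ cfX z n := by
  cases n <;> exact Int.fract_nonneg _

lemma cfX_lt_one (z : ℝ) (n : ℕ) : cfX z n < 1 := by
  cases n <;> exact Int.fract_lt_one _

lemma cfX_pos (hz : Irrational z) (n : ℕ) : 0 < cfX z n :=
  (cfX_nonneg z n).lt_of_ne (irrational_cfX hz n).ne_zero.symm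

lemma cfA_succ_add_cfX_succ (hz : Irrational z) (n : ℕ) :
    (cfA z (n + 1) : ℝ) + cfX z (n + 1) = (cfX z n)⁻¹ := by
  have hx := cfX_pos hz n
  show (⌊1 / cfX z n⌋₊ : ℝ) + Int.fract (1 / cfX z n) = _
  rw [natCast_floor_eq_intCast_floor (by positivity), Int.floor_add_fract, one_div]

lemma cfA_succ_pos (hz : Irrational z) (n : ℕ) : 0 < cfA z (n + 1) :=
  Nat.floor_pos.2 (one_le_one_div (cfX_pos hz n) (cfX_lt_one z n).le)

lemma cfX_mul_cfX_succ (hz : Irrational z) (n : ℕ) :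
    cfX z n * cfX z (n + 1) = 1 - cfA z (n + 1) * cfX z n := by
  have hx := (cfX_pos hz n).ne'
  linear_combination cfX z n * cfA_succ_add_cfX_succ hz n + mul_inv_cancel₀ hx

lemma prod_cfX_add_two (hz : Irrational z) (n : ℕ) :
    ∏ k ∈ range (n + 2), cfX z k
      = ∏ k ∈ range n, cfX z k - cfA z (n + 1) * ∏ k ∈ range (n + 1), cfX z k := by
  simp only [prod_range_succ]
  linear_combination (∏ k ∈ range n, cfX z k) * cfX_mul_cfX_succ hz n

lemma cfDen_mul_sub_cfNum (hz : Irrational z) : ∀ n,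
    (cfDen z n : ℝ) * z - cfNum z n = (-1) ^ (n + 1) * ∏ k ∈ range n, cfX z k
  | 0 => by simp [cfDen, cfNum]
  | 1 => by simp [cfDen, cfNum, cfX, ← Int.self_sub_floor]
  | n + 2 => by
    have h₀ := cfDen_mul_sub_cfNum hz n
    have h₁ := cfDen_mul_sub_cfNum hz (n + 1)
    simp only [cfDen, cfNum, prod_cfX_add_two hz, pow_succ] at h₁ ⊢
    push_cast
    linear_combination (cfA z (n + 1) : ℝ) * h₁ + h₀

lemma cfDen_succ_mul_prod_add (hz : Irrational z) : ∀ n,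
    (cfDen z (n + 1) : ℝ) * ∏ k ∈ range n, cfX z k
      + cfDen z n * ∏ k ∈ range (n + 1), cfX z k = 1
  | 0 => by simp [cfDen]
  | n + 1 => by
    have ih := cfDen_succ_mul_prod_add hz n
    simp only [cfDen, prod_cfX_add_two hz]
    push_cast
    linear_combination ih

lemma cfDen_succ_mul_cfNum_sub (z : ℝ) : ∀ n,
    cfDen z (n + 1) * cfNum z n - cfNum z (n + 1) * cfDen z n = (-1 : ℤ) ^ n
  | 0 => by simp [cfDen, cfNum]
  | n + 1 => by
    have ih := cfDen_succ_mul_cfNum_sub z n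
    simp only [cfDen, cfNum, pow_succ]
    push_cast
    linear_combination -ih

lemma isCoprime_cfNum_cfDen (z : ℝ) : ∀ n, IsCoprime (cfNum z n) (cfDen z n)
  | 0 => by simp [cfNum, isCoprime_one_left]
  | n + 1 => by
    have h := cfDen_succ_mul_cfNum_sub z n
    rcases neg_one_pow_eq_or ℤ n with h1 | h1 <;> rw [h1] at h
    · exact ⟨-cfDen z n, cfNum z n, by linear_combination h⟩
    · exact ⟨cfDen z n, -cfNum z n, by linear_combination -h⟩

lemma cfDen_le_cfDen_succ (hz : Irrational z) : ∀ n, cfDen z n ≤ cfDen z (n + 1)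
  | 0 => by simp [cfDen]
  | n + 1 => by
    have ha := cfA_succ_pos hz n
    show cfDen z (n + 1) ≤ cfA z (n + 1) * cfDen z (n + 1) + cfDen z n
    nlinarith

lemma cfDen_mono (hz : Irrational z) : Monotone (cfDen z) :=
  monotone_nat_of_le_succ (cfDen_le_cfDen_succ hz)

lemma one_le_cfDen_succ (hz : Irrational z) (n : ℕ) : 1 ≤ cfDen z (n + 1) :=
  cfDen_mono hz (Nat.le_add_left 1 n)

lemma le_cfDen_succ (hz : Irrational z) : ∀ n, n ≤ cfDen z (n + 1)
  | 0 => Nat.zero_le _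
  | 1 => one_le_cfDen_succ hz 1
  | n + 2 => by
    have ha := cfA_succ_pos hz (n + 1)
    have ih := le_cfDen_succ hz (n + 1)
    have hq := one_le_cfDen_succ hz n
    show n + 2 ≤ cfA z (n + 2) * cfDen z (n + 2) + cfDen z (n + 1)
    nlinarith

lemma cfDen_mul_abs_sub_cfNum_le_one (hz : Irrational z) (n : ℕ) :
    (cfDen z n : ℝ) * |cfDen z n * z - cfNum z n| ≤ 1 := by
  have hβ : 0 ≤ ∏ k ∈ range n, cfX z k := prod_nonneg fun k _ => cfX_nonneg z k
  have hβ' : 0 ≤ ∏ k ∈ range (n + 1), cfX z k := prod_nonneg fun k _ => cfX_nonneg z k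
  have hq : (cfDen z n : ℝ) ≤ cfDen z (n + 1) := by exact_mod_cast cfDen_le_cfDen_succ hz n
  rw [cfDen_mul_sub_cfNum hz, abs_mul, abs_pow, abs_neg, abs_one, one_pow, one_mul,
    abs_of_nonneg hβ]
  nlinarith [cfDen_succ_mul_prod_add hz n, Nat.cast_nonneg (α := ℝ) (cfDen z n)]

lemma cfDen_add_two_le {K : ℕ} (hz : Irrational z) (hK : ∀ n, 1 ≤ n → cfA z n ≤ K) (n : ℕ) :
    cfDen z (n + 2) ≤ (K + 1) * cfDen z (n + 1) := by
  have ha := hK (n + 1) (Nat.le_add_left 1 n)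
  have hq := cfDen_le_cfDen_succ hz n
  show cfA z (n + 1) * cfDen z (n + 1) + cfDen z n ≤ _
  nlinarith

end ContinuedFraction

lemma exists_le_and_lt_apply_succ {f : ℕ → ℕ} {N : ℕ} (h0 : f 0 ≤ N) (h : ∃ n, N < f n) :
    ∃ n, f n ≤ N ∧ N < f (n + 1) := by
  have hex : ∃ n, N < f (n + 1) := by
    obtain ⟨_ | n, hn⟩ := h
    · exact absurd h0 hn.not_ge
    · exact ⟨n, hn⟩
  refine ⟨Nat.find hex, ?_, Nat.find_spec hex⟩
  rcases hk : Nat.find hex with _ | k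
  · exact h0
  · exact not_lt.1 (Nat.find_min hex (by omega))

lemma dispersion_le_of_cfA_le {z : ℝ} (hz : Irrational z) {K : ℕ}
    (hK : ∀ n, 1 ≤ n → cfA z n ≤ K) {N : ℕ} (hN : 1 ≤ N) :
    dispersion z N ≤ 3 * (K + 1) / (2 * N) := by
  obtain ⟨n, hqN, hNq⟩ : ∃ n, cfDen z (n + 1) ≤ N ∧ N < cfDen z (n + 1 + 1) :=
    exists_le_and_lt_apply_succ (f := fun n => cfDen z (n + 1)) (by simpa [cfDen])
      ⟨N + 1, le_cfDen_succ hz (N + 1)⟩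
  set q := cfDen z (n + 1)
  have hq : 0 < q := one_le_cfDen_succ hz n
  have hqR : (0 : ℝ) < q := by exact_mod_cast hq
  have happrox : |q * z - cfNum z (n + 1)| ≤ 1 / q := by
    rw [le_div_iff₀' hqR]
    exact cfDen_mul_abs_sub_cfNum_le_one hz (n + 1)
  have hNK : (N : ℝ) ≤ (K + 1) * q := by
    exact_mod_cast hNq.le.trans (cfDen_add_two_le hz hK n)
  calc dispersion z N ≤ 1 / (2 * q) + |q * z - cfNum z (n + 1)| :=
        dispersion_le_of_isCoprime hq hqN (isCoprime_cfNum_cfDen z (n + 1)) z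
    _ ≤ 1 / (2 * q) + 1 / q := by gcongr
    _ = 3 * (K + 1) / (2 * ((K + 1) * q)) := by field_simp; ring
    _ ≤ 3 * (K + 1) / (2 * N) := by gcongr

theorem stmt10_general (z : ℝ) (hz : Irrational z) (K : ℕ)
    (hK : ∀ n : ℕ, 1 ≤ n → cfA z n ≤ K)
    (α : ℝ) (hα1 : α < 1) :
    Filter.Tendsto (fun N : ℕ => (N : ℝ) ^ α * dispersion z N)
      Filter.atTop (nhds 0) := by
  set C : ℝ := 3 * (K + 1) / 2
  have hpow : Tendsto (fun N : ℕ => C * (N : ℝ) ^ (α - 1)) atTop (𝓝 0) := by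
    have := (tendsto_rpow_neg_atTop (sub_pos.2 hα1)).comp tendsto_natCast_atTop_atTop
    simpa [Function.comp_def] using this.const_mul C
  refine squeeze_zero' (.of_forall fun N => mul_nonneg (by positivity) (dispersion_nonneg z N))
    ?_ hpow
  filter_upwards [eventually_ge_atTop 1] with N hN
  have hNR : (0 : ℝ) < N := by exact_mod_cast hN
  calc (N : ℝ) ^ α * dispersion z N ≤ N ^ α * (3 * (K + 1) / (2 * N)) := by
        gcongr
        exact dispersion_le_of_cfA_le hz hK hN
    _ = C * N ^ (α - 1) := by
        rw [Real.rpow_sub_one hNR.ne']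
        ring

theorem stmt10 (z : ℝ) (hz : Irrational z) (K : ℕ)
    (hK : ∀ n : ℕ, 1 ≤ n → cfA z n ≤ K)
    (α : ℝ) (hα0 : 0 < α) (hα1 : α < 1) :
    Filter.Tendsto (fun N : ℕ => (N : ℝ) ^ α * dispersion z N)
      Filter.atTop (nhds 0) :=
  stmt10_general z hz K hK α hα1
end
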